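/- arXiv:1702.01150 — 13 statements merged into one kernel-verified Lean document; each statement's English description precedes it below -/
import Mathlib

section
/- For any invertible element a and any element b in Z/nZ, the operations x*y = a·x + (1-a)·y, R1(x,y) = b·x + (1-b)·y, and R2(x,y) = a·(1-b)·x + (1 - a·(1-b))·y satisfy the oriented singquandle axioms: (1) R1(x ∗̄ y, z) * y = R1(x, z*y); (2) R2(x ∗̄ y, z) = R2(x, z*y) ∗̄ y; (3) (y ∗̄ R1(x,z)) * x = (y * R2(x,z)) ∗̄ z; (4) R2(x,y) = R1(y, x*y); (5) R1(x,y) * R2(x,y) = R2(y, x*y), where x ∗̄ y denotes the inverse operation a⁻¹·x + (1-a⁻¹)·y. -/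
/-! Every operation involved is an affine combination `t * x + (1 - t) * y` over a commutative
ring, so each axiom is a polynomial identity in `a`, `a⁻¹`, `b`, `x`, `y`, `z` that holds
modulo the single relation `a * a⁻¹ = 1`. -/

/-- Only the axioms tying `R1`, `R2` to `star` and its inverse `sbar`; the quandle axioms for `star`
are not part of this structure. -/
structure OrientedSingquandleAxioms {X : Type*} (star sbar R1 R2 : X → X → X) : Prop where
  star_R1_sbar : ∀ x y z, star (R1 (sbar x y) z) y = R1 x (star z y)
  R2_sbar : ∀ x y z, R2 (sbar x y) z = sbar (R2 x (star z y)) y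
  star_sbar_R1 : ∀ x y z, star (sbar y (R1 x z)) x = sbar (star y (R2 x z)) z
  R2_eq_R1_star : ∀ x y, R2 x y = R1 y (star x y)
  star_R1_R2 : ∀ x y, star (R1 x y) (R2 x y) = R2 y (star x y)

def affineComb {R : Type*} [CommRing R] (t x y : R) : R := t * x + (1 - t) * y

theorem orientedSingquandleAxioms_affineComb {R : Type*} [CommRing R] (a : Rˣ) (b : R) :
    OrientedSingquandleAxioms (affineComb (a : R)) (affineComb ((a⁻¹ : Rˣ) : R)) (affineComb b)
      (affineComb (a * (1 - b))) := by
  have h : (a : R) * (a⁻¹ : Rˣ) = 1 := a.mul_inv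
  constructor
  · intro x y z
    simp only [affineComb]
    linear_combination (b * x - b * y) * h
  · intro x y z
    simp only [affineComb]
    linear_combination (-z + y + a * z - a * y - a * b * z + a * b * y) * h
  · intro x y z
    simp only [affineComb]
    linear_combination (z - x - a * z + a * x + a * b * z - a * b * x) * h
  · intro x y
    simp only [affineComb]
    ring
  · intro x y
    simp only [affineComb]
    ring

theorem stmt_0 (n : ℕ) (a : (ZMod n)ˣ) (b : ZMod n) :
    let star : ZMod n → ZMod n → ZMod n := fun x y => (a : ZMod n) * x + (1 - (a : ZMod n)) * y
    let sbar : ZMod n → ZMod n → ZMod n := fun x y => ((a⁻¹ : (ZMod n)ˣ) : ZMod n) * x + (1 - ((a⁻¹ : (ZMod n)ˣ) : ZMod n)) * y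
    let R1 : ZMod n → ZMod n → ZMod n := fun x y => b * x + (1 - b) * y
    let R2 : ZMod n → ZMod n → ZMod n := fun x y => (a : ZMod n) * (1 - b) * x + (1 - (a : ZMod n) * (1 - b)) * y
    ∀ x y z : ZMod n,
      star (R1 (sbar x y) z) y = R1 x (star z y) ∧
      R2 (sbar x y) z = sbar (R2 x (star z y)) y ∧
      star (sbar y (R1 x z)) x = sbar (star y (R2 x z)) z ∧
      R2 x y = R1 y (star x y) ∧
      star (R1 x y) (R2 x y) = R2 y (star x y) := by
  intro star sbar R1 R2 x y z
  have h := orientedSingquandleAxioms_affineComb a b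
  exact ⟨h.star_R1_sbar x y z, h.R2_sbar x y z, h.star_sbar_R1 x y z, h.R2_eq_R1_star x y,
    h.star_R1_R2 x y⟩
end

section
/- Let X = Z/nZ with x*y = a·x + (1-a)·y where a is a unit. If R1(x,y) = b·x + c·y and R2(x,y) = a·c·x + (c·(1-a) + b)·y satisfy the oriented singquandle axiom (y ∗̄ R1(x,z)) * x = (y * R2(x,z)) ∗̄ z for all x,y,z, and a-1 is a unit, then c = 1 - b. -/
/-! Evaluating the axiom at `x = y = 0`, `z = 1` and multiplying by `a` leaves
`(a - 1) * (b + c - 1) = 0`; since `a - 1` is a unit, `b + c = 1`. -/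

lemma sub_one_mul_add_sub_one_eq_zero {R : Type*} [CommRing R] (a : Rˣ) (b c : R)
    (h : (a : R) * ((1 - ↑a⁻¹) * c) = ↑a⁻¹ * ((1 - ↑a) * (c * (1 - ↑a) + b)) + (1 - ↑a⁻¹)) :
    ((a : R) - 1) * (b + c - 1) = 0 := by
  linear_combination (a : R) * h + ((a : R) * c + (1 - (a : R)) * (c * (1 - a) + b) - 1) * a.mul_inv

theorem stmt_1 (n : ℕ) (a : (ZMod n)ˣ) (b c : ZMod n)
    (ha1 : IsUnit ((a : ZMod n) - 1))
    (star : ZMod n → ZMod n → ZMod n)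
    (hstar : ∀ x y, star x y = (a : ZMod n) * x + (1 - (a : ZMod n)) * y)
    (sbar : ZMod n → ZMod n → ZMod n)
    (hsbar : ∀ x y, sbar x y = ((a⁻¹ : (ZMod n)ˣ) : ZMod n) * x + (1 - ((a⁻¹ : (ZMod n)ˣ) : ZMod n)) * y)
    (R1 R2 : ZMod n → ZMod n → ZMod n)
    (hR1 : ∀ x y, R1 x y = b * x + c * y)
    (hR2 : ∀ x y, R2 x y = (a : ZMod n) * c * x + (c * (1 - (a : ZMod n)) + b) * y)
    (hax3 : ∀ x y z, star (sbar y (R1 x z)) x = sbar (star y (R2 x z)) z) :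
    c = 1 - b := by
  have h := hax3 0 0 1
  simp only [hstar, hsbar, hR1, hR2, mul_zero, zero_add, add_zero, mul_one] at h
  have hbc : b + c - 1 = 0 :=
    ha1.mul_right_eq_zero.mp (sub_one_mul_add_sub_one_eq_zero a b c h)
  linear_combination hbc
end

section
/- Let G be an abelian group, f : G → G a group automorphism, g : G → G a group endomorphism with f ∘ g = g ∘ f. Define x*y = f(x) + y - f(y), x ∗̄ y = f⁻¹(x) + y - f⁻¹(y), R1(x,y) = g(y) + x - g(x), and R2(x,y) = g(f(x)) + y - g(f(y)). Then (G, *, R1, R2) is an oriented singquandle: the quandle axioms hold for * and the five oriented singquandle axioms hold. -/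
theorem stmt_2 (G : Type*) [AddCommGroup G] (f : G ≃+ G) (g : G →+ G)
    (hfg : ∀ x, f (g x) = g (f x)) :
    let star : G → G → G := fun x y => f x + y - f y
    let sbar : G → G → G := fun x y => f.symm x + y - f.symm y
    let R1 : G → G → G := fun x y => g y + x - g x
    let R2 : G → G → G := fun x y => g (f x) + y - g (f y)
    ∀ x y z : G,
      star x x = x ∧
      star (sbar x y) y = x ∧
      sbar (star x y) y = x ∧
      star (star x y) z = star (star x z) (star y z) ∧
      star (R1 (sbar x y) z) y = R1 x (star z y) ∧
      R2 (sbar x y) z = sbar (R2 x (star z y)) y ∧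
      star (sbar y (R1 x z)) x = sbar (star y (R2 x z)) z ∧
      R2 x y = R1 y (star x y) ∧
      star (R1 x y) (R2 x y) = R2 y (star x y) := by
  intro star sbar R1 R2 x y z
  have hfg_symm : ∀ x, f.symm (g x) = g (f.symm x) :=
    Function.Semiconj.inverse_left hfg f.left_inv f.right_inv
  -- All five operations are affine; once `f`, `f⁻¹` and `g` are pushed through the sums and
  -- moved past one another, each axiom is an identity between sums of the same atoms.
  simp only [star, sbar, R1, R2, map_add, map_sub, hfg, hfg_symm, f.apply_symm_apply,
    f.symm_apply_apply]
  and_intros <;> abel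
end

section
/- Let G be a group with quandle operation x*y = y⁻¹xy. Then R1(x,y) = xyxy⁻¹x⁻¹ and R2(x,y) = xyx⁻¹ make (G, *, R1, R2) an oriented singquandle. -/
theorem stmt_4 (G : Type*) [Group G]  :
    let star : G → G → G := fun x y => y⁻¹ * x * y
    let sbar : G → G → G := fun x y => y * x * y⁻¹
    let R1 : G → G → G := fun x y => x * y * x * y⁻¹ * x⁻¹
    let R2 : G → G → G := fun x y => x * y * x⁻¹
    ∀ x y z : G,
      star (R1 (sbar x y) z) y = R1 x (star z y) ∧
      R2 (sbar x y) z = sbar (R2 x (star z y)) y ∧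
      star (sbar y (R1 x z)) x = sbar (star y (R2 x z)) z ∧
      R2 x y = R1 y (star x y) ∧
      star (R1 x y) (R2 x y) = R2 y (star x y) := by
  intro star sbar R1 R2 x y z
  simp only [star, sbar, R1, R2]
  exact ⟨by group, by group, by group, by group, by group⟩
end

section
/- Let G be a group with quandle operation x*y = y⁻¹xy. Then R1(x,y) = y⁻¹xy and R2(x,y) = y⁻¹x⁻¹yxy make (G, *, R1, R2) an oriented singquandle. -/
theorem stmt_5 (G : Type*) [Group G]  :
    let star : G → G → G := fun x y => y⁻¹ * x * y
    let sbar : G → G → G := fun x y => y * x * y⁻¹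
    let R1 : G → G → G := fun x y => y⁻¹ * x * y
    let R2 : G → G → G := fun x y => y⁻¹ * x⁻¹ * y * x * y
    ∀ x y z : G,
      star (R1 (sbar x y) z) y = R1 x (star z y) ∧
      R2 (sbar x y) z = sbar (R2 x (star z y)) y ∧
      star (sbar y (R1 x z)) x = sbar (star y (R2 x z)) z ∧
      R2 x y = R1 y (star x y) ∧
      star (R1 x y) (R2 x y) = R2 y (star x y) := by
  dsimp only
  intro x y z
  refine ⟨?_, ?_, ?_, ?_, ?_⟩ <;> group
end

section
/- Let G be a group with quandle operation x*y = y⁻¹xy. Then R1(x,y) = xy⁻¹x⁻¹yx and R2(x,y) = x⁻¹y⁻¹xy² make (G, *, R1, R2) an oriented singquandle. -/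
theorem stmt_6 (G : Type*) [Group G]  :
    let star : G → G → G := fun x y => y⁻¹ * x * y
    let sbar : G → G → G := fun x y => y * x * y⁻¹
    let R1 : G → G → G := fun x y => x * y⁻¹ * x⁻¹ * y * x
    let R2 : G → G → G := fun x y => x⁻¹ * y⁻¹ * x * y ^ 2
    ∀ x y z : G,
      star (R1 (sbar x y) z) y = R1 x (star z y) ∧
      R2 (sbar x y) z = sbar (R2 x (star z y)) y ∧
      star (sbar y (R1 x z)) x = sbar (star y (R2 x z)) z ∧
      R2 x y = R1 y (star x y) ∧
      star (R1 x y) (R2 x y) = R2 y (star x y) := by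
  intro star sbar R1 R2 x y z
  refine ⟨?_, ?_, ?_, ?_, ?_⟩ <;> simp only [star, sbar, R1, R2, sq] <;> group
end

section
/- Let G be a group with quandle operation x*y = y⁻¹xy, and let n ≥ 1. Then R1(x,y) = y(x⁻¹y)ⁿ and R2(x,y) = (y⁻¹x)^(n+1)·y make (G, *, R1, R2) an oriented singquandle. -/
/-!
Write `u = y⁻¹ x`. Then `R1(x,y) = y u⁻ⁿ` and `R2(x,y) = uⁿ⁺¹ y`, so `R1(x,y) R2(x,y) = x y`.
The first two axioms hold because `R1` and `R2` are words in their arguments and hence commute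
with conjugation; the fourth is a direct computation; the third and fifth follow from
`R1(x,y) R2(x,y) = x y` (the fifth together with the fourth).
-/

namespace ConjSingquandle

variable {G : Type*} [Group G] (n : ℕ)

def R1 (x y : G) : G := y * (x⁻¹ * y) ^ n

def R2 (x y : G) : G := (y⁻¹ * x) ^ (n + 1) * y

theorem map_R1 {H : Type*} [Group H] (f : G →* H) (x y : G) :
    f (R1 n x y) = R1 n (f x) (f y) := by
  simp only [R1, map_mul, map_pow, map_inv]

theorem map_R2 {H : Type*} [Group H] (f : G →* H) (x y : G) :
    f (R2 n x y) = R2 n (f x) (f y) := by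
  simp only [R2, map_mul, map_pow, map_inv]

theorem R1_conj (g x y : G) : R1 n (g * x * g⁻¹) (g * y * g⁻¹) = g * R1 n x y * g⁻¹ :=
  (map_R1 n (MulAut.conj g).toMonoidHom x y).symm

theorem R2_conj (g x y : G) : R2 n (g * x * g⁻¹) (g * y * g⁻¹) = g * R2 n x y * g⁻¹ :=
  (map_R2 n (MulAut.conj g).toMonoidHom x y).symm

theorem R1_mul_R2 (x y : G) : R1 n x y * R2 n x y = x * y := by
  have hu : (x⁻¹ * y) ^ n * (y⁻¹ * x) ^ n = 1 := by
    rw [show y⁻¹ * x = (x⁻¹ * y)⁻¹ by group, inv_pow, mul_inv_cancel]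
  simp only [R1, R2, pow_succ]
  calc y * (x⁻¹ * y) ^ n * ((y⁻¹ * x) ^ n * (y⁻¹ * x) * y)
      = y * ((x⁻¹ * y) ^ n * (y⁻¹ * x) ^ n) * (y⁻¹ * x) * y := by group
    _ = x * y := by rw [hu]; group

theorem R2_eq_R1_conj (x y : G) : R2 n x y = R1 n y (y⁻¹ * x * y) := by
  rw [R1, R2, show y⁻¹ * (y⁻¹ * x * y) = y⁻¹ * (y⁻¹ * x) * y⁻¹⁻¹ by group, conj_pow]
  group

end ConjSingquandle

open ConjSingquandle in
theorem stmt_7_general (G : Type*) [Group G] (n : ℕ) :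
    let star : G → G → G := fun x y => y⁻¹ * x * y
    let sbar : G → G → G := fun x y => y * x * y⁻¹
    let R1 : G → G → G := fun x y => y * (x⁻¹ * y) ^ n
    let R2 : G → G → G := fun x y => (y⁻¹ * x) ^ (n + 1) * y
    ∀ x y z : G,
      star (R1 (sbar x y) z) y = R1 x (star z y) ∧
      R2 (sbar x y) z = sbar (R2 x (star z y)) y ∧
      star (sbar y (R1 x z)) x = sbar (star y (R2 x z)) z ∧
      R2 x y = R1 y (star x y) ∧
      star (R1 x y) (R2 x y) = R2 y (star x y) := by
  intro star sbar R1' R2' x y z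
  have hz : z = y * (y⁻¹ * z * y) * y⁻¹ := by group
  refine ⟨?_, ?_, ?_, R2_eq_R1_conj n x y, ?_⟩
  · show y⁻¹ * R1 n (y * x * y⁻¹) z * y = R1 n x (y⁻¹ * z * y)
    rw [hz, R1_conj]
    group
  · show R2 n (y * x * y⁻¹) z = y * R2 n x (y⁻¹ * z * y) * y⁻¹
    rw [← R2_conj, ← hz]
  · show x⁻¹ * (R1 n x z * y * (R1 n x z)⁻¹) * x = z * ((R2 n x z)⁻¹ * y * R2 n x z) * z⁻¹
    rw [eq_mul_inv_of_mul_eq (R1_mul_R2 n x z)]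
    group
  · show (R2 n x y)⁻¹ * R1 n x y * R2 n x y = R2 n y (y⁻¹ * x * y)
    rw [mul_assoc, R1_mul_R2, eq_inv_mul_of_mul_eq (R1_mul_R2 n y (y⁻¹ * x * y)), ← R2_eq_R1_conj]
    group

theorem stmt_7 (G : Type*) [Group G] (n : ℕ) (hn : 1 ≤ n) :
    let star : G → G → G := fun x y => y⁻¹ * x * y
    let sbar : G → G → G := fun x y => y * x * y⁻¹
    let R1 : G → G → G := fun x y => y * (x⁻¹ * y) ^ n
    let R2 : G → G → G := fun x y => (y⁻¹ * x) ^ (n + 1) * y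
    ∀ x y z : G,
      star (R1 (sbar x y) z) y = R1 x (star z y) ∧
      R2 (sbar x y) z = sbar (R2 x (star z y)) y ∧
      star (sbar y (R1 x z)) x = sbar (star y (R2 x z)) z ∧
      R2 x y = R1 y (star x y) ∧
      star (R1 x y) (R2 x y) = R2 y (star x y) :=
  stmt_7_general G n
end

section
/- Let G be a group with x*y = y⁻¹xy, and let n ≥ 1. Then R1(x,y) = x(xy⁻¹)ⁿ and R2(x,y) = y(x⁻¹y)ⁿ satisfy the five oriented singquandle axioms. -/
/-!
Conjugation by any element is a group automorphism, and `R₁`, `R₂` are group words, so they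
commute with conjugation; this gives the first two axioms. The third holds because
`x⁻¹ R₁(x,z) = (x z⁻¹)ⁿ = z R₂(x,z)⁻¹`, so both sides conjugate `y` by the same element.
For the last one write `x = y a`: then `x y⁻¹ = y a y⁻¹` and `x⁻¹ y = a⁻¹`, and both sides
become `aⁿ⁺¹ y`.
-/

namespace ConjSingquandle

variable {G H : Type*} [Group G] [Group H] (n : ℕ)

def R₁ (x y : G) : G := x * (x * y⁻¹) ^ n

def R₂ (x y : G) : G := y * (x⁻¹ * y) ^ n

theorem map_R₁ (f : G →* H) (x y : G) : f (R₁ n x y) = R₁ n (f x) (f y) := by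
  simp only [R₁, map_mul, map_pow, map_inv]

theorem map_R₂ (f : G →* H) (x y : G) : f (R₂ n x y) = R₂ n (f x) (f y) := by
  simp only [R₂, map_mul, map_pow, map_inv]

theorem R₁_conj (g x y : G) : R₁ n (g * x * g⁻¹) (g * y * g⁻¹) = g * R₁ n x y * g⁻¹ :=
  (map_R₁ n (MulAut.conj g).toMonoidHom x y).symm

theorem R₂_conj (g x y : G) : R₂ n (g * x * g⁻¹) (g * y * g⁻¹) = g * R₂ n x y * g⁻¹ :=
  (map_R₂ n (MulAut.conj g).toMonoidHom x y).symm

theorem conj_R₁_conj (x y z : G) : y⁻¹ * R₁ n (y * x * y⁻¹) z * y = R₁ n x (y⁻¹ * z * y) := by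
  conv_lhs => rw [show z = y * (y⁻¹ * z * y) * y⁻¹ by group, R₁_conj]
  group

theorem R₂_conj_left (x y z : G) :
    R₂ n (y * x * y⁻¹) z = y * R₂ n x (y⁻¹ * z * y) * y⁻¹ := by
  conv_lhs => rw [show z = y * (y⁻¹ * z * y) * y⁻¹ by group, R₂_conj]

theorem inv_mul_R₁_eq_mul_inv_R₂ (x z : G) : x⁻¹ * R₁ n x z = z * (R₂ n x z)⁻¹ := by
  rw [R₁, R₂, inv_mul_cancel_left, mul_inv_rev, ← inv_pow,
    show (x⁻¹ * z)⁻¹ = z⁻¹ * (x * z⁻¹) * z⁻¹⁻¹ by group, conj_pow]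
  group

theorem conj_R₁_eq_conj_R₂ (x y z : G) :
    x⁻¹ * (R₁ n x z * y * (R₁ n x z)⁻¹) * x = z * ((R₂ n x z)⁻¹ * y * R₂ n x z) * z⁻¹ := by
  calc x⁻¹ * (R₁ n x z * y * (R₁ n x z)⁻¹) * x
      = (x⁻¹ * R₁ n x z) * y * (x⁻¹ * R₁ n x z)⁻¹ := by group
    _ = (z * (R₂ n x z)⁻¹) * y * (z * (R₂ n x z)⁻¹)⁻¹ := by rw [inv_mul_R₁_eq_mul_inv_R₂]
    _ = z * ((R₂ n x z)⁻¹ * y * R₂ n x z) * z⁻¹ := by group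

theorem R₂_eq_R₁_conj (x y : G) : R₂ n x y = R₁ n y (y⁻¹ * x * y) := by
  simp only [R₁, R₂]
  group

theorem conj_R₁_R₂ (x y : G) :
    (R₂ n x y)⁻¹ * R₁ n x y * R₂ n x y = R₂ n y (y⁻¹ * x * y) := by
  obtain ⟨a, rfl⟩ : ∃ a, x = y * a := ⟨y⁻¹ * x, by group⟩
  have hR₁ : R₁ n (y * a) y = y * a * y * a ^ n * y⁻¹ := by
    rw [R₁, conj_pow]
    group
  have hR₂ : R₂ n (y * a) y = y * (a ^ n)⁻¹ := by
    rw [R₂, show (y * a)⁻¹ * y = a⁻¹ by group, inv_pow]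
  have hRHS : R₂ n y (y⁻¹ * (y * a) * y) = a ^ (n + 1) * y := by
    rw [R₂, show y⁻¹ * (y⁻¹ * (y * a) * y) = y⁻¹ * a * y⁻¹⁻¹ by group, conj_pow, pow_succ]
    group
  rw [hR₁, hR₂, hRHS, pow_succ]
  group

end ConjSingquandle

open ConjSingquandle in
theorem stmt_8_general (G : Type*) [Group G] (n : ℕ) :
    let star : G → G → G := fun x y => y⁻¹ * x * y
    let sbar : G → G → G := fun x y => y * x * y⁻¹
    let R1 : G → G → G := fun x y => x * (x * y⁻¹) ^ n
    let R2 : G → G → G := fun x y => y * (x⁻¹ * y) ^ n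
    ∀ x y z : G,
      star (R1 (sbar x y) z) y = R1 x (star z y) ∧
      R2 (sbar x y) z = sbar (R2 x (star z y)) y ∧
      star (sbar y (R1 x z)) x = sbar (star y (R2 x z)) z ∧
      R2 x y = R1 y (star x y) ∧
      star (R1 x y) (R2 x y) = R2 y (star x y) := by
  intro star sbar R1 R2 x y z
  exact ⟨conj_R₁_conj n x y z, R₂_conj_left n x y z, conj_R₁_eq_conj_R₂ n x y z,
    R₂_eq_R₁_conj n x y, conj_R₁_R₂ n x y⟩

theorem stmt_8 (G : Type*) [Group G] (n : ℕ) (hn : 1 ≤ n) :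
    let star : G → G → G := fun x y => y⁻¹ * x * y
    let sbar : G → G → G := fun x y => y * x * y⁻¹
    let R1 : G → G → G := fun x y => x * (x * y⁻¹) ^ n
    let R2 : G → G → G := fun x y => y * (x⁻¹ * y) ^ n
    ∀ x y z : G,
      star (R1 (sbar x y) z) y = R1 x (star z y) ∧
      R2 (sbar x y) z = sbar (R2 x (star z y)) y ∧
      star (sbar y (R1 x z)) x = sbar (star y (R2 x z)) z ∧
      R2 x y = R1 y (star x y) ∧
      star (R1 x y) (R2 x y) = R2 y (star x y) :=
  stmt_8_general G n
end

section
/- Let G be a group with x*y = y⁻¹xy, and let n ≥ 1. Then R1(x,y) = (xy⁻¹)ⁿ·x and R2(x,y) = (x⁻¹y)ⁿ·y satisfy the five oriented singquandle axioms. -/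
/-!
Both maps are words in `x` and `y`, so they commute with every group homomorphism, in particular
with conjugation; this gives the first two axioms. Writing `u = y⁻¹ * x`, one has
`R1 x y = x * uⁿ` and `R2 x y = (uⁿ)⁻¹ * y`, and the remaining three axioms become identities
in `x`, `y` and `uⁿ`.
-/

namespace SingQuandle

variable {G : Type*} [Group G] (n : ℕ)

def singR1 (x y : G) : G := (x * y⁻¹) ^ n * x

def singR2 (x y : G) : G := (x⁻¹ * y) ^ n * y

lemma map_singR1 {H F : Type*} [Group H] [FunLike F G H] [MonoidHomClass F G H] (f : F)
    (x y : G) : singR1 n (f x) (f y) = f (singR1 n x y) := by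
  simp only [singR1, map_mul, map_pow, map_inv]

lemma map_singR2 {H F : Type*} [Group H] [FunLike F G H] [MonoidHomClass F G H] (f : F)
    (x y : G) : singR2 n (f x) (f y) = f (singR2 n x y) := by
  simp only [singR2, map_mul, map_pow, map_inv]

lemma singR1_conj (g x y : G) :
    singR1 n (g * x * g⁻¹) (g * y * g⁻¹) = g * singR1 n x y * g⁻¹ := by
  simpa only [MulAut.conj_apply] using map_singR1 n (MulAut.conj g) x y

lemma singR2_conj (g x y : G) :
    singR2 n (g * x * g⁻¹) (g * y * g⁻¹) = g * singR2 n x y * g⁻¹ := by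
  simpa only [MulAut.conj_apply] using map_singR2 n (MulAut.conj g) x y

lemma singR1_eq_mul_pow (x y : G) : singR1 n x y = x * (y⁻¹ * x) ^ n :=
  mul_pow_mul x y⁻¹ n

lemma singR2_eq_inv_pow_mul (x y : G) : singR2 n x y = ((y⁻¹ * x) ^ n)⁻¹ * y := by
  rw [singR2, ← inv_pow, mul_inv_rev, inv_inv]

lemma singR1_conj_left (x y z : G) :
    y⁻¹ * singR1 n (y * x * y⁻¹) z * y = singR1 n x (y⁻¹ * z * y) := by
  conv_lhs => rw [show z = y * (y⁻¹ * z * y) * y⁻¹ by group, singR1_conj]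
  group

lemma singR2_conj_left (x y z : G) :
    singR2 n (y * x * y⁻¹) z = y * singR2 n x (y⁻¹ * z * y) * y⁻¹ := by
  conv_lhs => rw [show z = y * (y⁻¹ * z * y) * y⁻¹ by group, singR2_conj]

lemma inv_mul_singR1 (x z : G) : x⁻¹ * singR1 n x z = z * (singR2 n x z)⁻¹ := by
  rw [singR1_eq_mul_pow, singR2_eq_inv_pow_mul]
  group

lemma conj_singR1_eq_conj_singR2 (x y z : G) :
    x⁻¹ * (singR1 n x z * y * (singR1 n x z)⁻¹) * x =
      z * ((singR2 n x z)⁻¹ * y * singR2 n x z) * z⁻¹ := by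
  have h : (singR1 n x z)⁻¹ * x = singR2 n x z * z⁻¹ := by
    rw [← inv_inj, mul_inv_rev, inv_inv, inv_mul_singR1, mul_inv_rev, inv_inv]
  calc x⁻¹ * (singR1 n x z * y * (singR1 n x z)⁻¹) * x
      = x⁻¹ * singR1 n x z * y * ((singR1 n x z)⁻¹ * x) := by group
    _ = z * ((singR2 n x z)⁻¹ * y * singR2 n x z) * z⁻¹ := by
      rw [inv_mul_singR1, h]; group

lemma singR2_eq_singR1_conj (x y : G) : singR2 n x y = singR1 n y (y⁻¹ * x * y) := by
  rw [singR1, singR2, mul_inv_rev, mul_inv_rev, inv_inv, mul_inv_cancel_left]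

lemma conj_singR1_singR2 (x y : G) :
    (singR2 n x y)⁻¹ * singR1 n x y * singR2 n x y = singR2 n y (y⁻¹ * x * y) := by
  have h : singR2 n y (y⁻¹ * x * y) = y⁻¹ * ((y⁻¹ * x) ^ n * x) * y := by
    simpa only [inv_inv, inv_mul_cancel, one_mul, singR2] using singR2_conj n y⁻¹ y x
  rw [h, singR1_eq_mul_pow, singR2_eq_inv_pow_mul]
  group

end SingQuandle

open SingQuandle in
theorem stmt_9_general (G : Type*) [Group G] (n : ℕ) :
    let star : G → G → G := fun x y => y⁻¹ * x * y
    let sbar : G → G → G := fun x y => y * x * y⁻¹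
    let R1 : G → G → G := fun x y => (x * y⁻¹) ^ n * x
    let R2 : G → G → G := fun x y => (x⁻¹ * y) ^ n * y
    ∀ x y z : G,
      star (R1 (sbar x y) z) y = R1 x (star z y) ∧
      R2 (sbar x y) z = sbar (R2 x (star z y)) y ∧
      star (sbar y (R1 x z)) x = sbar (star y (R2 x z)) z ∧
      R2 x y = R1 y (star x y) ∧
      star (R1 x y) (R2 x y) = R2 y (star x y) := by
  intro star sbar R1 R2 x y z
  exact ⟨singR1_conj_left n x y z, singR2_conj_left n x y z,
    conj_singR1_eq_conj_singR2 n x y z, singR2_eq_singR1_conj n x y, conj_singR1_singR2 n x y⟩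

theorem stmt_9 (G : Type*) [Group G] (n : ℕ) (hn : 1 ≤ n) :
    let star : G → G → G := fun x y => y⁻¹ * x * y
    let sbar : G → G → G := fun x y => y * x * y⁻¹
    let R1 : G → G → G := fun x y => (x * y⁻¹) ^ n * x
    let R2 : G → G → G := fun x y => (x⁻¹ * y) ^ n * y
    ∀ x y z : G,
      star (R1 (sbar x y) z) y = R1 x (star z y) ∧
      R2 (sbar x y) z = sbar (R2 x (star z y)) y ∧
      star (sbar y (R1 x z)) x = sbar (star y (R2 x z)) z ∧
      R2 x y = R1 y (star x y) ∧
      star (R1 x y) (R2 x y) = R2 y (star x y) :=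
  stmt_9_general G n
end

section
/- Let G be a group, n ≥ 1, and define R1(x,y) = x(xy⁻¹)ⁿ, R2(x,y) = y(x⁻¹y)ⁿ. Then for all x, y ∈ G: (x = R1(y, y⁻¹xy) ∧ y = R2(y, y⁻¹xy)) if and only if (x⁻¹y)^(n+1) = 1. -/
/-!
Write `z = y⁻¹ * x * y`. Since `y * z⁻¹ = x⁻¹ * y`, the first equation reads
`x = y * (x⁻¹ * y) ^ n`, i.e. `(x⁻¹ * y) ^ (n + 1) = 1`. Conjugation by `y⁻¹` fixes `y` and
sends `x` to `z`, so the second equation is the conjugate of `y = x * (y⁻¹ * x) ^ n`, i.e. of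
`(y⁻¹ * x) ^ (n + 1) = 1`; as `y⁻¹ * x = (x⁻¹ * y)⁻¹`, both equations say the same thing.
-/

section

variable {G : Type*} [Group G]

theorem eq_mul_inv_mul_pow_iff (a b : G) (n : ℕ) :
    a = b * (a⁻¹ * b) ^ n ↔ (a⁻¹ * b) ^ (n + 1) = 1 := by
  rw [pow_succ', mul_assoc, inv_mul_eq_one]

theorem inv_mul_pow_eq_one_comm (a b : G) (n : ℕ) :
    (a⁻¹ * b) ^ n = 1 ↔ (b⁻¹ * a) ^ n = 1 := by
  rw [← inv_eq_one, ← inv_pow, mul_inv_rev, inv_inv]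

theorem mul_inv_conj_eq (x y : G) : y * (y⁻¹ * x * y)⁻¹ = x⁻¹ * y := by
  group

theorem conj_mul_inv_mul_conj_pow (x y : G) (n : ℕ) :
    y⁻¹ * x * y * (y⁻¹ * (y⁻¹ * x * y)) ^ n = y⁻¹ * (x * (y⁻¹ * x) ^ n) * y := by
  have hconj : ∀ g, MulAut.conj y⁻¹ g = y⁻¹ * g * y := fun g => by simp
  have hfix : MulAut.conj y⁻¹ y = y := by simp
  calc y⁻¹ * x * y * (y⁻¹ * (y⁻¹ * x * y)) ^ n
      = MulAut.conj y⁻¹ x * ((MulAut.conj y⁻¹ y)⁻¹ * MulAut.conj y⁻¹ x) ^ n := by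
        rw [hfix, hconj]
    _ = MulAut.conj y⁻¹ (x * (y⁻¹ * x) ^ n) := by
        simp only [map_mul, map_pow, map_inv]
    _ = y⁻¹ * (x * (y⁻¹ * x) ^ n) * y := hconj _

theorem self_eq_inv_mul_mul_self_iff (w y : G) : y = y⁻¹ * w * y ↔ y = w := by
  rw [eq_comm, mul_eq_right, inv_mul_eq_one]

end

theorem stmt_11_general (G : Type*) [Group G] (n : ℕ)
    (R1 R2 : G → G → G)
    (hR1 : ∀ x y, R1 x y = x * (x * y⁻¹) ^ n)
    (hR2 : ∀ x y, R2 x y = y * (x⁻¹ * y) ^ n) :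
    ∀ x y : G,
      (x = R1 y (y⁻¹ * x * y) ∧ y = R2 y (y⁻¹ * x * y)) ↔ (x⁻¹ * y) ^ (n + 1) = 1 := by
  intro x y
  rw [hR1, hR2, mul_inv_conj_eq, conj_mul_inv_mul_conj_pow, self_eq_inv_mul_mul_self_iff,
    eq_mul_inv_mul_pow_iff, eq_mul_inv_mul_pow_iff, inv_mul_pow_eq_one_comm y, and_self]

theorem stmt_11 (G : Type*) [Group G] (n : ℕ) (hn : 1 ≤ n)
    (R1 R2 : G → G → G)
    (hR1 : ∀ x y, R1 x y = x * (x * y⁻¹) ^ n)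
    (hR2 : ∀ x y, R2 x y = y * (x⁻¹ * y) ^ n) :
    ∀ x y : G,
      (x = R1 y (y⁻¹ * x * y) ∧ y = R2 y (y⁻¹ * x * y)) ↔ (x⁻¹ * y) ^ (n + 1) = 1 :=
  stmt_11_general G n R1 R2 hR1 hR2
end

section
/- Let G be a group, n ≥ 1, and define R1(x,y) = (xy⁻¹)ⁿ·x, R2(x,y) = (x⁻¹y)ⁿ·y. Then for all x, y ∈ G: (x = R1(y, y⁻¹xy) ∧ y = R2(y, y⁻¹xy)) if and only if x⁻¹(x⁻¹y)ⁿy = 1. -/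
/-! With `z = y⁻¹ x y` one has `y z⁻¹ = x⁻¹ y`, so the first equation says `x = (x⁻¹ y)ⁿ y`, i.e.
`(x⁻¹ y)ⁿ = x y⁻¹`. Inverting gives `(y⁻¹ x)ⁿ = y x⁻¹`, and since `y⁻¹ z` is the conjugate of
`y⁻¹ x` by `y`, the second equation `(y⁻¹ z)ⁿ z = y` follows from the first. -/

section

variable {G : Type*} [Group G]

theorem inv_mul_conj_pow (x y : G) (n : ℕ) :
    (y⁻¹ * (y⁻¹ * x * y)) ^ n = y⁻¹ * (y⁻¹ * x) ^ n * y := by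
  simpa [mul_assoc] using conj_pow (a := y⁻¹) (b := y⁻¹ * x) (i := n)

theorem eq_pow_mul_iff_inv_mul_pow_mul_eq_one (x y : G) (n : ℕ) :
    x = (x⁻¹ * y) ^ n * y ↔ x⁻¹ * (x⁻¹ * y) ^ n * y = 1 := by
  rw [mul_assoc, inv_mul_eq_one]

theorem inv_mul_conj_pow_mul_conj_eq (x y : G) (n : ℕ) (h : x = (x⁻¹ * y) ^ n * y) :
    (y⁻¹ * (y⁻¹ * x * y)) ^ n * (y⁻¹ * x * y) = y := by
  have hpow : (x⁻¹ * y) ^ n = x * y⁻¹ := eq_mul_inv_of_mul_eq h.symm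
  have hpow_inv : (y⁻¹ * x) ^ n = y * x⁻¹ := by
    rw [← inv_inv (y⁻¹ * x), inv_pow, mul_inv_rev, inv_inv, hpow, mul_inv_rev, inv_inv]
  rw [inv_mul_conj_pow, hpow_inv]
  group

end

theorem stmt_12_general (G : Type*) [Group G] (n : ℕ)
    (R1 R2 : G → G → G)
    (hR1 : ∀ x y, R1 x y = (x * y⁻¹) ^ n * x)
    (hR2 : ∀ x y, R2 x y = (x⁻¹ * y) ^ n * y) :
    ∀ x y : G,
      (x = R1 y (y⁻¹ * x * y) ∧ y = R2 y (y⁻¹ * x * y)) ↔ x⁻¹ * (x⁻¹ * y) ^ n * y = 1 := by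
  intro x y
  rw [hR1, hR2, mul_inv_conj_eq, ← eq_pow_mul_iff_inv_mul_pow_mul_eq_one]
  exact ⟨And.left, fun h => ⟨h, (inv_mul_conj_pow_mul_conj_eq x y n h).symm⟩⟩

theorem stmt_12 (G : Type*) [Group G] (n : ℕ) (hn : 1 ≤ n)
    (R1 R2 : G → G → G)
    (hR1 : ∀ x y, R1 x y = (x * y⁻¹) ^ n * x)
    (hR2 : ∀ x y, R2 x y = (x⁻¹ * y) ^ n * y) :
    ∀ x y : G,
      (x = R1 y (y⁻¹ * x * y) ∧ y = R2 y (y⁻¹ * x * y)) ↔ x⁻¹ * (x⁻¹ * y) ^ n * y = 1 :=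
  stmt_12_general G n R1 R2 hR1 hR2
end

section
/- Let G be a group, n ≥ 1, and define R1(x,y) = x(yx⁻¹)^(n+1), R2(x,y) = x(y⁻¹x)ⁿ. Then for all x, y ∈ G: (x = R1(y, y⁻¹xy) ∧ y = R2(y, y⁻¹xy)) if and only if (y⁻¹x)ⁿ = 1. -/
/-! Put `a = y⁻¹ * x`, so `x = y * a`. Substituting `y⁻¹ * x * y` into `R1` gives `y * a ^ (n + 1)`,
which equals `y * a` exactly when `a ^ n = 1`; substituting it into `R2` gives `y` times a conjugate
of `(a ^ n)⁻¹`, which equals `y` under the same condition. -/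

section

variable {G : Type*} [Group G]

theorem eq_mul_pow_succ_iff_pow_eq_one (x y : G) (n : ℕ) :
    x = y * (y⁻¹ * x) ^ (n + 1) ↔ (y⁻¹ * x) ^ n = 1 := by
  rw [← inv_mul_eq_iff_eq_mul, pow_succ, eq_comm, mul_eq_right]

theorem self_eq_mul_conj_pow_iff (y b : G) (n : ℕ) :
    y = y * (y⁻¹ * b * y) ^ n ↔ b ^ n = 1 := by
  have hconj : (y⁻¹ * b * y) ^ n = y⁻¹ * b ^ n * y := by
    simpa using conj_pow (a := y⁻¹) (b := b) (i := n)
  rw [eq_comm, mul_eq_left, hconj]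
  simpa using conj_eq_one_iff (a := y⁻¹) (b := b ^ n)

end

theorem stmt_13_general (G : Type*) [Group G] (n : ℕ)
    (R1 R2 : G → G → G)
    (hR1 : ∀ x y, R1 x y = x * (y * x⁻¹) ^ (n + 1))
    (hR2 : ∀ x y, R2 x y = x * (y⁻¹ * x) ^ n) :
    ∀ x y : G,
      (x = R1 y (y⁻¹ * x * y) ∧ y = R2 y (y⁻¹ * x * y)) ↔ (y⁻¹ * x) ^ n = 1 := by
  intro x y
  have hR1_arg : y⁻¹ * x * y * y⁻¹ = y⁻¹ * x := mul_inv_cancel_right _ _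
  have hR2_arg : (y⁻¹ * x * y)⁻¹ * y = y⁻¹ * (y⁻¹ * x)⁻¹ * y := by group
  rw [hR1, hR2, hR1_arg, hR2_arg, eq_mul_pow_succ_iff_pow_eq_one, self_eq_mul_conj_pow_iff,
    inv_pow, inv_eq_one, and_self]

theorem stmt_13 (G : Type*) [Group G] (n : ℕ) (hn : 1 ≤ n)
    (R1 R2 : G → G → G)
    (hR1 : ∀ x y, R1 x y = x * (y * x⁻¹) ^ (n + 1))
    (hR2 : ∀ x y, R2 x y = x * (y⁻¹ * x) ^ n) :
    ∀ x y : G,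
      (x = R1 y (y⁻¹ * x * y) ∧ y = R2 y (y⁻¹ * x * y)) ↔ (y⁻¹ * x) ^ n = 1 :=
  stmt_13_general G n R1 R2 hR1 hR2
end

section
/- Let Λ = Z[t,t⁻¹,v] and let X be a Λ-module. Set α = a·t + b·v + c·t·v for fixed a,b,c ∈ Z, and define x*y = t·x + (1-t)·y, x ∗̄ y = t⁻¹·x + (1-t⁻¹)·y, R1(x,y) = α·x + (1-α)·y, R2(x,y) = t·(1-α)·x + (1-t)·(1-α)·y + α·y. Then (X, *, R1, R2) satisfies the five oriented singquandle axioms. -/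
/-! All four operations are affine combinations `r • x + (1 - r) • y`: `*` and `∗̄` with the
mutually inverse coefficients `t` and `t⁻¹`, `R1` with `α` and `R2` with `t (1 - α)`. Affine
combinations distribute over one another, and `· ∗̄ y` undoes `· * y`, which gives the first two
axioms. The third follows from `(u * x) * z = (u * R1(x, z)) * R2(x, z)` after cancelling
`· * z`, and the last two are polynomial identities. -/

namespace AffineSingquandle

variable {R M : Type*} [CommRing R] [AddCommGroup M] [Module R M]

def affineOp (r : R) (x y : M) : M := r • x + (1 - r) • y

theorem affineOp_affineOp_cancel {r s : R} (h : r * s = 1) (x y : M) :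
    affineOp r (affineOp s x y) y = x := by
  simp only [affineOp]
  match_scalars
  · linear_combination h
  · linear_combination -h

theorem affineOp_affineOp_distrib_right (r s : R) (w y z : M) :
    affineOp r (affineOp s w z) y = affineOp s (affineOp r w y) (affineOp r z y) := by
  simp only [affineOp]
  match_scalars <;> ring

theorem affineOp_affineOp_pair (r s : R) (u x z : M) :
    affineOp r (affineOp r u (affineOp s x z)) (affineOp (r * (1 - s)) x z) =
      affineOp r (affineOp r u x) z := by
  simp only [affineOp]
  match_scalars <;> ring

variable {t u : R} (α : R)

theorem axiom_one (htu : t * u = 1) (x y z : M) :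
    affineOp t (affineOp α (affineOp u x y) z) y = affineOp α x (affineOp t z y) := by
  rw [affineOp_affineOp_distrib_right, affineOp_affineOp_cancel htu]

theorem axiom_two (htu : t * u = 1) (x y z : M) :
    affineOp (t * (1 - α)) (affineOp u x y) z =
      affineOp u (affineOp (t * (1 - α)) x (affineOp t z y)) y := by
  have hut : u * t = 1 := by rw [mul_comm, htu]
  calc affineOp (t * (1 - α)) (affineOp u x y) z
      = affineOp u (affineOp t (affineOp (t * (1 - α)) (affineOp u x y) z) y) y :=
        (affineOp_affineOp_cancel hut _ _).symm
    _ = affineOp u (affineOp (t * (1 - α)) x (affineOp t z y)) y := by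
        rw [affineOp_affineOp_distrib_right t, affineOp_affineOp_cancel htu]

theorem axiom_three (htu : t * u = 1) (x y z : M) :
    affineOp t (affineOp u y (affineOp α x z)) x =
      affineOp u (affineOp t y (affineOp (t * (1 - α)) x z)) z := by
  have hut : u * t = 1 := by rw [mul_comm, htu]
  calc affineOp t (affineOp u y (affineOp α x z)) x
      = affineOp u (affineOp t (affineOp t (affineOp u y (affineOp α x z)) x) z) z :=
        (affineOp_affineOp_cancel hut _ _).symm
    _ = affineOp u (affineOp t (affineOp t (affineOp u y (affineOp α x z)) (affineOp α x z))
          (affineOp (t * (1 - α)) x z)) z := by rw [affineOp_affineOp_pair]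
    _ = affineOp u (affineOp t y (affineOp (t * (1 - α)) x z)) z := by
        rw [affineOp_affineOp_cancel htu]

theorem axiom_four (x y : M) :
    affineOp (t * (1 - α)) x y = affineOp α y (affineOp t x y) := by
  simp only [affineOp]
  match_scalars <;> ring

theorem axiom_five (x y : M) :
    affineOp t (affineOp α x y) (affineOp (t * (1 - α)) x y) =
      affineOp (t * (1 - α)) y (affineOp t x y) := by
  simp only [affineOp]
  match_scalars <;> ring

end AffineSingquandle

open AffineSingquandle

open LaurentPolynomial in
theorem stmt_16 (X : Type*) [AddCommGroup X]
    [Module (LaurentPolynomial (Polynomial ℤ)) X]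
    (a b c : ℤ) :
    let t : LaurentPolynomial (Polynomial ℤ) := T 1
    let tinv : LaurentPolynomial (Polynomial ℤ) := T (-1)
    let v : LaurentPolynomial (Polynomial ℤ) := LaurentPolynomial.C Polynomial.X
    let α : LaurentPolynomial (Polynomial ℤ) := a • t + b • v + c • (t * v)
    let star : X → X → X := fun x y => t • x + (1 - t) • y
    let sbar : X → X → X := fun x y => tinv • x + (1 - tinv) • y
    let R1 : X → X → X := fun x y => α • x + (1 - α) • y
    let R2 : X → X → X := fun x y => (t * (1 - α)) • x + ((1 - t) * (1 - α)) • y + α • y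
    ∀ x y z : X,
      star (R1 (sbar x y) z) y = R1 x (star z y) ∧
      R2 (sbar x y) z = sbar (R2 x (star z y)) y ∧
      star (sbar y (R1 x z)) x = sbar (star y (R2 x z)) z ∧
      R2 x y = R1 y (star x y) ∧
      star (R1 x y) (R2 x y) = R2 y (star x y) := by
  intro t tinv v α star sbar R1 R2 x y z
  have ht : t * tinv = 1 := by rw [← T_add, add_neg_cancel, T_zero]
  have hstar : star = affineOp t := rfl
  have hsbar : sbar = affineOp tinv := rfl
  have hR1 : R1 = affineOp α := rfl
  have hR2 : R2 = affineOp (t * (1 - α)) := by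
    funext x y
    simp only [R2, affineOp]
    match_scalars <;> ring
  rw [hstar, hsbar, hR1, hR2]
  exact ⟨axiom_one α ht x y z, axiom_two α ht x y z, axiom_three α ht x y z,
    axiom_four α x y, axiom_five α x y⟩
end
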